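/- Theorem (tightness of Perturbed Smoothed GDA for optimization stationarity). Let ε ∈ (0,1) and ℓ, D_Y > 0, and consider the hard OS instance. Run Perturbed Smoothed GDA on it with parameters r_x > ℓ, r_y > 0, α > 0, β ∈ (0,1) and 0 < c < 1/(r_x + ℓ), and assume (A_3 + B_3·β)² ≥ 4ℓcβγ and 2ℓcγβ < A_3 + B_3·β (so that −1 < λ_3 < 0). Initialize y_0 := D_Y, x_0 := ((3D_Y + 2)/(ℓ·D_Y))·ε and z_0 := x_0/v_1, where v_1 := 2c·r_x/(A_3 − B_3·β + √((A_3 − B_3·β)² + 4c·r_x·β(1 − A_3))), and assume 0 < x_0 < 1 and 0 < z_0 < 1. Then for every T ∈ ℕ, if x_T is an ε-optimization-stationary point of min_{x∈ℝ} max_{y∈[0,D_Y]} f(x,y), then (1 + λ_3)^T ≤ 1/2. -/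

import Mathlib

noncomputable section

/-- The function `h` of the hard OS instance. -/
def hOS (l Dy : ℝ) (x : ℝ) : ℝ :=
  if |x| ≤ 1 then l / (2 * (Dy + 1)) * x ^ 2
  else if |x| < 2 then l / (Dy + 1) - l / (2 * (Dy + 1)) * (|x| - 2) ^ 2
  else l / (Dy + 1)

/-- The derivative of `hOS` in `x`. -/
def hOS' (l Dy : ℝ) (x : ℝ) : ℝ :=
  if |x| ≤ 1 then l / (Dy + 1) * x
  else if |x| < 2 then -(l / (Dy + 1)) * (|x| - 2) * Real.sign x
  else 0

/-- Metric projection of `v` onto the interval `[0, Dy]`. -/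
def projI (Dy v : ℝ) : ℝ := max 0 (min Dy v)

/-- Value function `Φ(z) = max_{y ∈ [0, Dy]} h(z)·y` of the hard OS instance. -/
def PhiOS (l Dy : ℝ) (z : ℝ) : ℝ :=
  sSup ((fun y => hOS l Dy z * y) '' Set.Icc (0 : ℝ) Dy)

/-- `x` is an `ε`-optimization-stationary point of the hard OS instance:
the minimizer `p` of `Φ(z) + ℓ(z − x)²` over `z ∈ ℝ` satisfies `|p − x| ≤ ε/(2ℓ)`. -/
def IsOS1 (l Dy ε x : ℝ) : Prop :=
  ∃ p : ℝ, (∀ z : ℝ, PhiOS l Dy p + l * (p - x) ^ 2 ≤ PhiOS l Dy z + l * (z - x) ^ 2) ∧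
    |p - x| ≤ ε / (2 * l)

/-- `A₃ = ℓcγ + c r_x`. -/
def A3 (l c rx γ : ℝ) : ℝ := l * c * γ + c * rx

/-- `B₃ = 1 − c r_x`. -/
def B3 (c rx : ℝ) : ℝ := 1 - c * rx

/-- `λ₃ = −(A₃ + B₃β)/2 + (1/2)·√((A₃ + B₃β)² − 4ℓcβγ)`. -/
def lam3 (l c rx γ β : ℝ) : ℝ :=
  -(A3 l c rx γ + B3 c rx * β) / 2 +
    Real.sqrt ((A3 l c rx γ + B3 c rx * β) ^ 2 - 4 * l * c * β * γ) / 2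

/-!
While `x` stays in `[0, 1]`, the `x`-update of Perturbed Smoothed GDA on this instance is linear,
`x⁺ = (1 − c(ℓ/(D_Y + 1))y − c r_x) x + c r_x z`, and since `y ≤ D_Y` its coefficient is at least
`1 − A₃`. Together with the averaging `z⁺ = (1 − β) z + β x⁺`, the pair `(x, z)` thus dominates the
linear system `I + M₃` started on its positive eigenvector `(v₁, 1)`, so `x_T ≥ (1 + λ₃)^T x₀`.
On `[−1, 1]` the value function is `Φ(z) = ℓγz²/2`, so the proximal point of `x_T` is
`2x_T/(γ + 2)`, and `ε`-optimization-stationarity forces `x_T ≤ x₀/2`.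
-/

lemma hOS_nonneg {l Dy : ℝ} (hl : 0 ≤ l) (hDy : 0 ≤ Dy) (x : ℝ) : 0 ≤ hOS l Dy x := by
  have hk : 0 ≤ l / (2 * (Dy + 1)) := by positivity
  unfold hOS
  split_ifs with h1 h2
  · positivity
  · have : (|x| - 2) ^ 2 ≤ 1 := by nlinarith
    have : l / (Dy + 1) = 2 * (l / (2 * (Dy + 1))) := by field_simp
    nlinarith
  · positivity

lemma div_le_hOS {l Dy x : ℝ} (hl : 0 ≤ l) (hDy : 0 ≤ Dy) (hx : 1 ≤ |x|) :
    l / (2 * (Dy + 1)) ≤ hOS l Dy x := by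
  have hk : 0 ≤ l / (2 * (Dy + 1)) := by positivity
  have hk2 : l / (Dy + 1) = 2 * (l / (2 * (Dy + 1))) := by field_simp
  unfold hOS
  split_ifs with h1 h2
  · rw [← sq_abs, le_antisymm h1 hx, one_pow, mul_one]
  · have : (|x| - 2) ^ 2 ≤ 1 := by nlinarith
    nlinarith
  · linarith

lemma PhiOS_eq_hOS_mul {l Dy : ℝ} (hl : 0 ≤ l) (hDy : 0 ≤ Dy) (z : ℝ) :
    PhiOS l Dy z = hOS l Dy z * Dy := by
  refine IsGreatest.csSup_eq ⟨⟨Dy, Set.right_mem_Icc.2 hDy, rfl⟩, ?_⟩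
  rintro _ ⟨y, hy, rfl⟩
  exact mul_le_mul_of_nonneg_left hy.2 (hOS_nonneg hl hDy z)

lemma PhiOS_of_abs_le_one {l Dy z : ℝ} (hl : 0 ≤ l) (hDy : 0 ≤ Dy) (hz : |z| ≤ 1) :
    PhiOS l Dy z = l * Dy / (2 * (Dy + 1)) * z ^ 2 := by
  rw [PhiOS_eq_hOS_mul hl hDy, hOS, if_pos hz]
  ring

lemma PhiOS_le_of_abs_le_one_le_abs {l Dy y z : ℝ} (hl : 0 ≤ l) (hDy : 0 ≤ Dy)
    (hy : |y| ≤ 1) (hz : 1 ≤ |z|) : PhiOS l Dy y ≤ PhiOS l Dy z := by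
  have hy2 : y ^ 2 ≤ 1 := by rw [← sq_abs]; nlinarith [abs_nonneg y]
  rw [PhiOS_of_abs_le_one hl hDy hy, PhiOS_eq_hOS_mul hl hDy]
  calc l * Dy / (2 * (Dy + 1)) * y ^ 2 ≤ l / (2 * (Dy + 1)) * Dy := by
        rw [mul_div_right_comm]
        exact mul_le_of_le_one_right (by positivity) hy2
    _ ≤ hOS l Dy z * Dy := mul_le_mul_of_nonneg_right (div_le_hOS hl hDy hz) hDy

/-- The minimizer of `ℓγz²/2 + ℓ(z − x)²` with `γ = D_Y/(D_Y + 1)`, which is the proximal point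
`prox_{Φ/(2ℓ)}(x)` as long as `|x| ≤ 1`. -/
def proxOS (Dy x : ℝ) : ℝ := 2 * (Dy + 1) / (3 * Dy + 2) * x

lemma proxOS_sub_self (Dy x : ℝ) (hDy : 0 ≤ Dy) :
    proxOS Dy x - x = -(Dy / (3 * Dy + 2) * x) := by
  unfold proxOS
  field_simp
  ring

lemma abs_proxOS_lt_one {Dy x : ℝ} (hDy : 0 < Dy) (hx : |x| ≤ 1) : |proxOS Dy x| < 1 := by
  have hq : 2 * (Dy + 1) / (3 * Dy + 2) < 1 := by rw [div_lt_one (by positivity)]; linarith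
  rw [proxOS, abs_mul, abs_of_pos (by positivity)]
  nlinarith [mul_le_mul_of_nonneg_left hx (by positivity : (0 : ℝ) ≤ 2 * (Dy + 1) / (3 * Dy + 2))]

lemma PhiOS_add_sq_eq {l Dy x z : ℝ} (hl : 0 ≤ l) (hDy : 0 < Dy) (hx : |x| ≤ 1)
    (hz : |z| ≤ 1) :
    PhiOS l Dy z + l * (z - x) ^ 2 =
      PhiOS l Dy (proxOS Dy x) + l * (proxOS Dy x - x) ^ 2 +
        l * (3 * Dy + 2) / (2 * (Dy + 1)) * (z - proxOS Dy x) ^ 2 := by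
  rw [PhiOS_of_abs_le_one hl hDy.le hz,
    PhiOS_of_abs_le_one hl hDy.le (abs_proxOS_lt_one hDy hx).le, proxOS]
  field_simp
  ring

lemma PhiOS_add_sq_lt {l Dy x z : ℝ} (hl : 0 < l) (hDy : 0 < Dy) (hx : |x| ≤ 1)
    (hz : z ≠ proxOS Dy x) :
    PhiOS l Dy (proxOS Dy x) + l * (proxOS Dy x - x) ^ 2 < PhiOS l Dy z + l * (z - x) ^ 2 := by
  have hq := abs_proxOS_lt_one hDy hx
  have inner : ∀ w, |w| ≤ 1 → w ≠ proxOS Dy x →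
      PhiOS l Dy (proxOS Dy x) + l * (proxOS Dy x - x) ^ 2 < PhiOS l Dy w + l * (w - x) ^ 2 := by
    intro w hw hwq
    rw [PhiOS_add_sq_eq hl.le hDy hx hw, lt_add_iff_pos_right]
    exact mul_pos (by positivity) (sq_pos_of_ne_zero (sub_ne_zero.2 hwq))
  rcases le_or_gt |z| 1 with hz1 | hz1
  · exact inner z hz1 hz
  rcases lt_abs.1 hz1 with hpos | hneg
  · calc _ < PhiOS l Dy 1 + l * (1 - x) ^ 2 := inner 1 (by simp) (by grind [abs_lt])
      _ ≤ PhiOS l Dy z + l * (z - x) ^ 2 := by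
        gcongr ?_ + l * ?_
        · exact PhiOS_le_of_abs_le_one_le_abs hl.le hDy.le (by simp) hz1.le
        · nlinarith [abs_le.1 hx]
  · calc _ < PhiOS l Dy (-1) + l * (-1 - x) ^ 2 := inner (-1) (by simp) (by grind [abs_lt])
      _ ≤ PhiOS l Dy z + l * (z - x) ^ 2 := by
        gcongr ?_ + l * ?_
        · exact PhiOS_le_of_abs_le_one_le_abs hl.le hDy.le (by simp) hz1.le
        · nlinarith [abs_le.1 hx]

theorem IsOS1.abs_le {l Dy ε x : ℝ} (hl : 0 < l) (hDy : 0 < Dy) (hx : |x| ≤ 1)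
    (h : IsOS1 l Dy ε x) : |x| ≤ (3 * Dy + 2) / (2 * l * Dy) * ε := by
  obtain ⟨p, hmin, hp⟩ := h
  have hpq : p = proxOS Dy x := by
    by_contra hne
    exact (PhiOS_add_sq_lt hl hDy hx hne).not_ge (hmin _)
  rw [hpq, proxOS_sub_self Dy x hDy.le, abs_neg, abs_mul, abs_of_pos (by positivity)] at hp
  rw [div_mul_eq_mul_div, le_div_iff₀ (by positivity)]
  rw [div_mul_eq_mul_div, div_le_div_iff₀ (by positivity) (by positivity)] at hp
  linarith

lemma A3_lt_one {l c rx γ : ℝ} (hl : 0 ≤ l) (hc : 0 ≤ c) (hγ : γ ≤ 1) (hc1 : c * (rx + l) < 1) :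
    A3 l c rx γ < 1 := by
  unfold A3
  nlinarith [mul_nonneg hl hc]

lemma lam3_discr_eq (l c rx γ β : ℝ) :
    (A3 l c rx γ + B3 c rx * β) ^ 2 - 4 * l * c * β * γ =
      (A3 l c rx γ - B3 c rx * β) ^ 2 + 4 * c * rx * β * (1 - A3 l c rx γ) := by
  unfold A3 B3
  ring

/-- `(v₁, 1)` is an eigenvector of `M₃` for the eigenvalue `λ₃`, written here as the eigenvector
equation of `I + M₃` for `1 + λ₃`. -/
theorem lam3_eigenvector {l c rx γ β v1 : ℝ} (hβ : 0 < β) (hcrx : 0 < c * rx)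
    (hA : A3 l c rx γ < 1)
    (hv1 : v1 = 2 * c * rx / (A3 l c rx γ - B3 c rx * β +
      Real.sqrt ((A3 l c rx γ - B3 c rx * β) ^ 2 + 4 * c * rx * β * (1 - A3 l c rx γ)))) :
    0 < v1 ∧ (1 - A3 l c rx γ) * v1 + c * rx = (1 + lam3 l c rx γ β) * v1 ∧
      1 - β + β * (1 + lam3 l c rx γ β) * v1 = 1 + lam3 l c rx γ β := by
  set A := A3 l c rx γ
  set B := B3 c rx
  set D := (A + B * β) ^ 2 - 4 * l * c * β * γ
  have hDeq : D = (A - B * β) ^ 2 + 4 * c * rx * β * (1 - A) := lam3_discr_eq l c rx γ β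
  have hgap : (A - B * β) ^ 2 < D := by
    rw [hDeq, lt_add_iff_pos_right]
    have : 0 < 1 - A := by linarith
    linarith [mul_pos (mul_pos hcrx hβ) this]
  have hsq : Real.sqrt D ^ 2 = D := Real.sq_sqrt ((sq_nonneg _).trans hgap.le)
  have hden : 0 < A - B * β + Real.sqrt D := by
    have := Real.lt_sqrt_of_sq_lt (x := B * β - A) (by rwa [← neg_sub, neg_sq])
    linarith
  rw [← hDeq] at hv1
  have hlam : lam3 l c rx γ β = (-(A + B * β) + Real.sqrt D) / 2 := by rw [lam3]; ring
  have hrow : v1 * (lam3 l c rx γ β + A) = c * rx := by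
    rw [hv1, hlam]
    field_simp
    ring
  -- `λ₃` is a root of the characteristic polynomial of `M₃`
  have hchar : lam3 l c rx γ β ^ 2 + (A + B * β) * lam3 l c rx γ β + l * c * β * γ = 0 := by
    rw [hlam]
    linear_combination hsq / 4
  refine ⟨hv1 ▸ div_pos (by linarith) hden, by linear_combination -hrow, ?_⟩
  have hlamA : 0 < lam3 l c rx γ β + A := by rw [hlam]; linarith
  apply mul_right_cancel₀ hlamA.ne'
  have hAdef : A = l * c * γ + c * rx := rfl
  simp only [B, B3] at hchar
  linear_combination β * (1 + lam3 l c rx γ β) * hrow - hchar - β * hAdef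

theorem eigen_mul_pow_le {x z : ℕ → ℝ} {a b β μ v s : ℝ} (ha : 0 ≤ a) (hb : 0 ≤ b)
    (hβ0 : 0 ≤ β) (hβ1 : β ≤ 1)
    (hx : ∀ t, a * x t + b * z t ≤ x (t + 1))
    (hz : ∀ t, (1 - β) * z t + β * x (t + 1) ≤ z (t + 1))
    (hv : a * v + b = μ * v) (hμ : 1 - β + β * μ * v = μ)
    (hx0 : v * s ≤ x 0) (hz0 : s ≤ z 0) :
    ∀ t, v * s * μ ^ t ≤ x t ∧ s * μ ^ t ≤ z t := by
  intro t
  induction t with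
  | zero => simpa using ⟨hx0, hz0⟩
  | succ t ih =>
    obtain ⟨ihx, ihz⟩ := ih
    have hxt : v * s * μ ^ (t + 1) ≤ x (t + 1) :=
      calc v * s * μ ^ (t + 1) = a * (v * s * μ ^ t) + b * (s * μ ^ t) := by
            rw [pow_succ]; linear_combination (-(s * μ ^ t)) * hv
        _ ≤ a * x t + b * z t := by gcongr
        _ ≤ x (t + 1) := hx t
    refine ⟨hxt, ?_⟩
    calc s * μ ^ (t + 1) = (1 - β) * (s * μ ^ t) + β * (v * s * μ ^ (t + 1)) := by
          rw [pow_succ]; linear_combination (-(s * μ ^ t)) * hμ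
      _ ≤ (1 - β) * z t + β * x (t + 1) := by gcongr
      _ ≤ z (t + 1) := hz t

lemma projI_mem_Icc {Dy : ℝ} (hDy : 0 ≤ Dy) (v : ℝ) : projI Dy v ∈ Set.Icc 0 Dy :=
  ⟨le_max_left _ _, max_le hDy (min_le_left _ _)⟩

lemma mul_add_mul_mem_Icc {a b x z M : ℝ} (ha : 0 ≤ a) (hb : 0 ≤ b) (hab : a + b ≤ 1)
    (hx : x ∈ Set.Icc 0 M) (hz : z ∈ Set.Icc 0 M) : a * x + b * z ∈ Set.Icc 0 M := by
  obtain ⟨hx0, hxM⟩ := hx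
  obtain ⟨hz0, hzM⟩ := hz
  constructor
  · positivity
  · nlinarith [mul_le_mul_of_nonneg_left hxM ha, mul_le_mul_of_nonneg_left hzM hb]

section Iterates

variable {l Dy rx β c : ℝ}

lemma psgda_x_step_eq {x y z : ℝ} (hx : |x| ≤ 1) :
    x - c * (hOS' l Dy x * y + rx * (x - z)) =
      (1 - c * (l / (Dy + 1) * y) - c * rx) * x + c * rx * z := by
  rw [hOS', if_pos hx]
  ring

lemma step_gain_mem_Icc {y : ℝ} (hl : 0 ≤ l) (hc : 0 ≤ c) (hDy : 0 ≤ Dy)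
    (hy : y ∈ Set.Icc 0 Dy) :
    c * (l / (Dy + 1) * y) ∈ Set.Icc 0 (l * c * (Dy / (Dy + 1))) := by
  refine ⟨by have := hy.1; positivity, ?_⟩
  calc c * (l / (Dy + 1) * y) ≤ c * (l / (Dy + 1) * Dy) := by gcongr; exact hy.2
    _ = l * c * (Dy / (Dy + 1)) := by ring

lemma psgda_x_step_ge {x y z : ℝ} (hl : 0 ≤ l) (hc : 0 ≤ c) (hDy : 0 ≤ Dy)
    (hx : x ∈ Set.Icc 0 1) (hy : y ∈ Set.Icc 0 Dy) :
    (1 - A3 l c rx (Dy / (Dy + 1))) * x + c * rx * z ≤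
      x - c * (hOS' l Dy x * y + rx * (x - z)) := by
  rw [psgda_x_step_eq (abs_le.2 ⟨by linarith [hx.1], hx.2⟩), A3]
  nlinarith [(step_gain_mem_Icc hl hc hDy hy).2, hx.1]

theorem psgda_mem_Icc {xs ys zs : ℕ → ℝ} (hl : 0 ≤ l) (hDy : 0 ≤ Dy)
    (hc : 0 ≤ c) (hrx : 0 ≤ rx) (hβ0 : 0 ≤ β) (hβ1 : β ≤ 1) (hA : A3 l c rx (Dy / (Dy + 1)) ≤ 1)
    (hy : ∀ t, ys t ∈ Set.Icc 0 Dy) (hx0 : xs 0 ∈ Set.Icc 0 1) (hz0 : zs 0 ∈ Set.Icc 0 1)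
    (hxrec : ∀ t, xs (t + 1) = xs t - c * (hOS' l Dy (xs t) * ys t + rx * (xs t - zs t)))
    (hzrec : ∀ t, zs (t + 1) = zs t + β * (xs (t + 1) - zs t)) :
    ∀ t, xs t ∈ Set.Icc 0 1 ∧ zs t ∈ Set.Icc 0 1 := by
  intro t
  induction t with
  | zero => exact ⟨hx0, hz0⟩
  | succ t ih =>
    obtain ⟨hxt, hzt⟩ := ih
    have hgain := step_gain_mem_Icc hl hc hDy (hy t)
    have hx : xs (t + 1) ∈ Set.Icc 0 1 := by
      rw [hxrec, psgda_x_step_eq (abs_le.2 ⟨by linarith [hxt.1], hxt.2⟩)]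
      refine mul_add_mul_mem_Icc ?_ (by positivity) (by linarith [hgain.1]) hxt hzt
      rw [A3] at hA
      linarith [hgain.2]
    refine ⟨hx, ?_⟩
    rw [hzrec, show zs t + β * (xs (t + 1) - zs t) = (1 - β) * zs t + β * xs (t + 1) by ring]
    exact mul_add_mul_mem_Icc (by linarith) hβ0 (by linarith) hzt hx

end Iterates

theorem psgda_os_tightness_general
    (l Dy ε ry rx α β c γ v1 : ℝ) (xs ys zs : ℕ → ℝ)
    (hl : 0 < l) (hDy : 0 < Dy)
    (hrx : l < rx) (hβ : 0 < β) (hβ1 : β < 1)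
    (hc : 0 < c) (hc1 : c < 1 / (rx + l))
    (hγ : γ = Dy / (Dy + 1))
    -- v₁: first coordinate of the eigenvector of the frozen-dual recursion
    (hv1 : v1 = 2 * c * rx / (A3 l c rx γ - B3 c rx * β +
      Real.sqrt ((A3 l c rx γ - B3 c rx * β) ^ 2 + 4 * c * rx * β * (1 - A3 l c rx γ))))
    -- initialization
    (hy0 : ys 0 = Dy)
    (hx0 : xs 0 = (3 * Dy + 2) / (l * Dy) * ε)
    (hz0 : zs 0 = xs 0 / v1)
    (hx0mem : 0 < xs 0 ∧ xs 0 < 1) (hz0mem : 0 < zs 0 ∧ zs 0 < 1)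
    -- Perturbed Smoothed GDA iterations on F̃(x,y,z) = h(x)·y + (r_x/2)(x−z)² − (r_y/2)y²
    (hxrec : ∀ t, xs (t + 1) = xs t - c * (hOS' l Dy (xs t) * ys t + rx * (xs t - zs t)))
    (hyrec : ∀ t, ys (t + 1) = projI Dy (ys t + α * (hOS l Dy (xs (t + 1)) - ry * ys t)))
    (hzrec : ∀ t, zs (t + 1) = zs t + β * (xs (t + 1) - zs t)) :
    ∀ T : ℕ, IsOS1 l Dy ε (xs T) →
      (1 + lam3 l c rx γ β) ^ T ≤ 1 / 2 := by
  intro T hT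
  subst hγ
  have hcrx : 0 < c * rx := mul_pos hc (hl.trans hrx)
  have hA : A3 l c rx (Dy / (Dy + 1)) < 1 :=
    A3_lt_one hl.le hc.le (div_le_one_of_le₀ (by linarith) (by linarith))
      (by rwa [lt_div_iff₀ (by linarith)] at hc1)
  have hy : ∀ t, ys t ∈ Set.Icc 0 Dy := by
    rintro (_ | t)
    · rw [hy0]; exact Set.right_mem_Icc.2 hDy.le
    · exact hyrec t ▸ projI_mem_Icc hDy.le _
  have hxz := psgda_mem_Icc hl.le hDy.le hc.le (hl.trans hrx).le hβ.le hβ1.le hA.le hy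
    ⟨hx0mem.1.le, hx0mem.2.le⟩ ⟨hz0mem.1.le, hz0mem.2.le⟩ hxrec hzrec
  obtain ⟨hv1pos, heig1, heig2⟩ := lam3_eigenvector hβ hcrx hA hv1
  have hv1z0 : v1 * zs 0 = xs 0 := by rw [hz0]; field_simp
  have hlow : xs 0 * (1 + lam3 l c rx (Dy / (Dy + 1)) β) ^ T ≤ xs T :=
    hv1z0 ▸ (eigen_mul_pow_le (by linarith) hcrx.le hβ.le hβ1.le
      (fun t => hxrec t ▸ psgda_x_step_ge hl.le hc.le hDy.le (hxz t).1 (hy t))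
      (fun t => le_of_eq (by rw [hzrec]; ring)) heig1 heig2 hv1z0.le le_rfl T).1
  have hhalf : xs T ≤ xs 0 / 2 := by
    obtain ⟨hxT0, hxT1⟩ := (hxz T).1
    have h := IsOS1.abs_le hl hDy (abs_le.2 ⟨by linarith, hxT1⟩) hT
    rw [abs_of_nonneg hxT0] at h
    rw [hx0]
    convert h using 1
    field_simp
  exact le_of_mul_le_mul_left (by linarith [hlow.trans hhalf]) hx0mem.1

/-- Tightness of Perturbed Smoothed GDA for optimization stationarity on the
hard OS instance, with `γ = D_Y/(D_Y + 1)`. -/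
theorem psgda_os_tightness
    (l Dy ε ry rx α β c γ v1 : ℝ) (xs ys zs : ℕ → ℝ)
    (hl : 0 < l) (hDy : 0 < Dy) (hε : 0 < ε) (hε1 : ε < 1)
    (hry : 0 < ry) (hrx : l < rx) (hα : 0 < α) (hβ : 0 < β) (hβ1 : β < 1)
    (hc : 0 < c) (hc1 : c < 1 / (rx + l))
    (hγ : γ = Dy / (Dy + 1))
    -- conditions ensuring −1 < λ₃ < 0
    (hdisc : (A3 l c rx γ + B3 c rx * β) ^ 2 ≥ 4 * l * c * β * γ)
    (hlam : 2 * l * c * γ * β < A3 l c rx γ + B3 c rx * β)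
    -- v₁: first coordinate of the eigenvector of the frozen-dual recursion
    (hv1 : v1 = 2 * c * rx / (A3 l c rx γ - B3 c rx * β +
      Real.sqrt ((A3 l c rx γ - B3 c rx * β) ^ 2 + 4 * c * rx * β * (1 - A3 l c rx γ))))
    -- initialization
    (hy0 : ys 0 = Dy)
    (hx0 : xs 0 = (3 * Dy + 2) / (l * Dy) * ε)
    (hz0 : zs 0 = xs 0 / v1)
    (hx0mem : 0 < xs 0 ∧ xs 0 < 1) (hz0mem : 0 < zs 0 ∧ zs 0 < 1)
    -- Perturbed Smoothed GDA iterations on F̃(x,y,z) = h(x)·y + (r_x/2)(x−z)² − (r_y/2)y²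
    (hxrec : ∀ t, xs (t + 1) = xs t - c * (hOS' l Dy (xs t) * ys t + rx * (xs t - zs t)))
    (hyrec : ∀ t, ys (t + 1) = projI Dy (ys t + α * (hOS l Dy (xs (t + 1)) - ry * ys t)))
    (hzrec : ∀ t, zs (t + 1) = zs t + β * (xs (t + 1) - zs t)) :
    ∀ T : ℕ, IsOS1 l Dy ε (xs T) →
      (1 + lam3 l c rx γ β) ^ T ≤ 1 / 2 :=
  psgda_os_tightness_general l Dy ε ry rx α β c γ v1 xs ys zs hl hDy hrx hβ hβ1 hc hc1 hγ hv1 hy0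
    hx0 hz0 hx0mem hz0mem hxrec hyrec hzrec
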